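/- Let A ⊆ X be a convex subgraph of a directed graph X such that there are no edges from X∖A into A. Then the map p: MC(X) → MC(A) defined on generators by p(x₀,...,x_k) = (x₀,...,x_k) if x_k ∈ A and 0 otherwise, is a chain map splitting the inclusion MC(A) → MC(X). -/

import Mathlib

open scoped Classical

/-- A directed graph on a vertex type `V` (loops allowed, no parallel edges). -/
structure DGraph (V : Type) where
  Adj : V → V → Prop

namespace DGraph
variable {V : Type}

/-- There is a directed path of length `n` (i.e. with `n` edges) from `x` to `y`. -/
def PathLen (G : DGraph V) (x y : V) (n : ℕ) : Prop :=
  ∃ f : ℕ → V, f 0 = x ∧ f n = y ∧ ∀ i < n, G.Adj (f i) (f (i + 1))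

/-- The shortest path metric, with values in `ℕ∞ = ℕ ∪ {∞}`. -/
noncomputable def edist (G : DGraph V) (x y : V) : ℕ∞ :=
  sInf {n : ℕ∞ | ∃ m : ℕ, n = m ∧ G.PathLen x y m}

/-- The length of a tuple of vertices: the sum of consecutive distances. -/
noncomputable def tlen (G : DGraph V) {k : ℕ} (f : Fin (k + 1) → V) : ℕ∞ :=
  ∑ i : Fin k, G.edist (f i.castSucc) (f i.succ)

/-- `y` is reachable from `x` by a directed path. -/
def Reaches (G : DGraph V) (x y : V) : Prop := Relation.ReflTransGen G.Adj x y

/-- The induced subgraph on a set of vertices. -/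
def induce (G : DGraph V) (A : Set V) : DGraph A := ⟨fun a b => G.Adj a.1 b.1⟩

end DGraph

variable {V : Type}

/-- Validity of a tuple as a magnitude-chain basis element of degree `k` and length `ℓ`:
consecutive entries are distinct, at finite distance, and the total length is `ℓ`. -/
def MCValid (G : DGraph V) (k ℓ : ℕ) (f : Fin (k + 1) → V) : Prop :=
  (∀ i : Fin k, G.edist (f i.castSucc) (f i.succ) ≠ 0 ∧ G.edist (f i.castSucc) (f i.succ) ≠ ⊤) ∧
    G.tlen f = (ℓ : ℕ∞)

/-- Basis of the magnitude chain group `MC_{k,ℓ}(G)`. -/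
def MCb (G : DGraph V) (k ℓ : ℕ) : Type := {f : Fin (k + 1) → V // MCValid G k ℓ f}

/-- The magnitude chain group `MC_{k,ℓ}(G)` with coefficients in `R`. -/
abbrev MCMod (R : Type) [CommRing R] (G : DGraph V) (k ℓ : ℕ) := MCb G k ℓ →₀ R

/-- Deletion of the interior entry in position `j+1` of a `(k+2)`-tuple. -/
def delMid {k : ℕ} (f : Fin (k + 2) → V) (j : Fin k) : Fin (k + 1) → V :=
  f ∘ (Fin.succAbove j.succ.castSucc)

/-- The magnitude-chain differential `MC_{k+1,ℓ}(G) → MC_{k,ℓ}(G)`: delete interior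
entries with alternating signs, omitting any length-decreasing term. -/
noncomputable def dMC (R : Type) [CommRing R] (G : DGraph V) (k ℓ : ℕ) :
    MCMod R G (k + 1) ℓ →ₗ[R] MCMod R G k ℓ :=
  Finsupp.lsum R fun b => LinearMap.toSpanSingleton R _
    (∑ j : Fin k, (-1 : R) ^ ((j : ℕ) + 1) •
      (if h : MCValid G k ℓ (delMid b.1 j) then
        Finsupp.single (⟨delMid b.1 j, h⟩ : MCb G k ℓ) (1 : R) else 0))

/-- The outgoing magnitude differential from degree `k` (zero in degree `0`). -/
noncomputable def dMCOut (R : Type) [CommRing R] (G : DGraph V) (ℓ : ℕ) :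
    (k : ℕ) → MCMod R G k ℓ →ₗ[R] MCMod R G (k - 1) ℓ
  | 0 => 0
  | (k + 1) => dMC R G k ℓ

/-- Magnitude homology `MH_{k,ℓ}(G)` with coefficients in `R`. -/
noncomputable abbrev MH (R : Type) [CommRing R] (G : DGraph V) (k ℓ : ℕ) :=
  letI : HasQuotient (LinearMap.ker (dMCOut R G ℓ k))
      (Submodule R (LinearMap.ker (dMCOut R G ℓ k))) :=
        @Submodule.hasQuotient R (LinearMap.ker (dMCOut R G ℓ k)) _ _ _
  LinearMap.ker (dMCOut R G ℓ k) ⧸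
    (LinearMap.range (dMCOut R G ℓ (k + 1))).comap (LinearMap.ker (dMCOut R G ℓ k)).subtype

/-- Embedding of the magnitude chains into the free module on all tuples of vertices. -/
noncomputable def eMC (R : Type) [CommRing R] (G : DGraph V) (k ℓ : ℕ) :
    MCMod R G k ℓ →ₗ[R] ((Fin (k + 1) → V) →₀ R) :=
  Finsupp.lmapDomain R R Subtype.val

/-- Basis of a subcomplex of the magnitude chains, cut out by a predicate `P` on tuples
(assumed closed under the interior deletions appearing in the differential). -/
def RCb (G : DGraph V) (P : ∀ k, (Fin (k + 1) → V) → Prop) (k ℓ : ℕ) : Type :=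
  {f : Fin (k + 1) → V // MCValid G k ℓ f ∧ P k f}

/-- The degree-`k`, length-`ℓ` chain group of the subcomplex cut out by `P`. -/
abbrev RMod (R : Type) [CommRing R] (G : DGraph V) (P : ∀ k, (Fin (k + 1) → V) → Prop)
    (k ℓ : ℕ) := RCb G P k ℓ →₀ R

/-- The differential of the subcomplex cut out by `P`. -/
noncomputable def dR (R : Type) [CommRing R] (G : DGraph V)
    (P : ∀ k, (Fin (k + 1) → V) → Prop) (k ℓ : ℕ) :
    RMod R G P (k + 1) ℓ →ₗ[R] RMod R G P k ℓ :=
  Finsupp.lsum R fun b => LinearMap.toSpanSingleton R _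
    (∑ j : Fin k, (-1 : R) ^ ((j : ℕ) + 1) •
      (if h : MCValid G k ℓ (delMid b.1 j) ∧ P k (delMid b.1 j) then
        Finsupp.single (⟨delMid b.1 j, h⟩ : RCb G P k ℓ) (1 : R) else 0))

/-- The outgoing differential of the subcomplex from degree `k` (zero in degree `0`). -/
noncomputable def dROut (R : Type) [CommRing R] (G : DGraph V)
    (P : ∀ k, (Fin (k + 1) → V) → Prop) (ℓ : ℕ) :
    (k : ℕ) → RMod R G P k ℓ →ₗ[R] RMod R G P (k - 1) ℓ
  | 0 => 0
  | (k + 1) => dR R G P k ℓ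

/-- The degree-`k`, length-`ℓ` homology of the subcomplex cut out by `P`. -/
noncomputable abbrev RH (R : Type) [CommRing R] (G : DGraph V)
    (P : ∀ k, (Fin (k + 1) → V) → Prop) (k ℓ : ℕ) :=
  letI : HasQuotient (LinearMap.ker (dROut R G P ℓ k))
      (Submodule R (LinearMap.ker (dROut R G P ℓ k))) :=
        @Submodule.hasQuotient R (LinearMap.ker (dROut R G P ℓ k)) _ _ _
  LinearMap.ker (dROut R G P ℓ k) ⧸
    (LinearMap.range (dROut R G P ℓ (k + 1))).comap (LinearMap.ker (dROut R G P ℓ k)).subtype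

/-- Embedding of the subcomplex chains into the free module on all tuples of vertices. -/
noncomputable def eR (R : Type) [CommRing R] (G : DGraph V)
    (P : ∀ k, (Fin (k + 1) → V) → Prop) (k ℓ : ℕ) :
    RMod R G P k ℓ →ₗ[R] ((Fin (k + 1) → V) →₀ R) :=
  Finsupp.lmapDomain R R Subtype.val

/-- `A ⊆ V`, with projection `π`, is a cofibration in `G`: an induced subgraph inclusion
with no edges from outside `A` into `A`, such that every vertex `x` in the reach of `A`
has a projection `π x ∈ A` with `d(a,x) = d(a,π x) + d(π x,x)` for all `a ∈ A`. -/
def IsCofib (G : DGraph V) (A : Set V) (π : V → V) : Prop :=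
  (∀ u v : V, u ∉ A → v ∈ A → ¬ G.Adj u v) ∧
  (∀ x : V, (∃ a ∈ A, G.Reaches a x) →
    π x ∈ A ∧ ∀ a ∈ A, G.edist a x = G.edist a (π x) + G.edist (π x) x)

/-- The predicate cutting out the subcomplex `A_{*,ℓ}(a,x)` of `MC_{*,ℓ}(X)`: tuples
starting at `a`, ending at `x`, with all intermediate entries in `A`. -/
def AP (A : Set V) (a x : V) : ∀ k, (Fin (k + 1) → V) → Prop :=
  fun k f => f 0 = a ∧ f (Fin.last k) = x ∧
    ∀ i : Fin (k + 1), i ≠ 0 → i ≠ Fin.last k → f i ∈ A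

/-!
By the no-entry condition, a tuple whose consecutive entries are at finite distance and whose
last entry lies in `A` lies entirely in `A`, and by convexity its length is the same in `A` as
in `X`. Hence the generators of `MC(A)` are exactly the generators of `MC(X)` ending in `A`, and
`p` is the coordinate projection onto them. The differential only deletes interior entries, so
it maps generators ending in `A` into `MC(A)` and generators ending outside `A` to chains ending
outside `A`, which are killed by `p`; this makes `p` a chain map.
-/

open Finsupp

theorem DGraph.exists_pathLen_of_edist_ne_top {G : DGraph V} {x y : V}
    (h : G.edist x y ≠ ⊤) : ∃ m, G.PathLen x y m := by
  by_contra! hn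
  refine h (sInf_eq_top.2 ?_)
  rintro _ ⟨m, -, hm⟩
  exact absurd hm (hn m)

theorem DGraph.PathLen.mem_of_noEntry {G : DGraph V} {A : Set V}
    (hnoentry : ∀ u v : V, u ∉ A → v ∈ A → ¬ G.Adj u v) {x y : V} {n : ℕ}
    (h : G.PathLen x y n) (hy : y ∈ A) : x ∈ A := by
  obtain ⟨f, rfl, rfl, hadj⟩ := h
  exact Nat.decreasingInduction (motive := fun m _ => f m ∈ A)
    (fun k hk hsucc => by_contra fun hk' => hnoentry _ _ hk' hsucc (hadj k hk)) hy n.zero_le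

theorem MCValid.mem_of_last_mem {G : DGraph V} {A : Set V}
    (hnoentry : ∀ u v : V, u ∉ A → v ∈ A → ¬ G.Adj u v) {k ℓ : ℕ} {f : Fin (k + 1) → V}
    (hf : MCValid G k ℓ f) (hlast : f (Fin.last k) ∈ A) (i : Fin (k + 1)) : f i ∈ A := by
  induction i using Fin.reverseInduction with
  | last => exact hlast
  | cast i ih =>
    obtain ⟨m, hm⟩ := DGraph.exists_pathLen_of_edist_ne_top (hf.1 i).2
    exact hm.mem_of_noEntry hnoentry ih

theorem mcValid_induce_iff {G : DGraph V} {A : Set V}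
    (hconv : ∀ a b : A, (G.induce A).edist a b = G.edist a.1 b.1) {k ℓ : ℕ}
    (g : Fin (k + 1) → A) :
    MCValid (G.induce A) k ℓ g ↔ MCValid G k ℓ (fun i => (g i : V)) := by
  simp only [MCValid, DGraph.tlen, hconv]

theorem delMid_last {k : ℕ} (f : Fin (k + 2) → V) (j : Fin k) :
    delMid f j (Fin.last k) = f (Fin.last (k + 1)) := by
  rw [delMid, Function.comp_apply, Fin.succAbove_of_le_castSucc, Fin.succ_last]
  simp only [Fin.le_def, Fin.val_castSucc, Fin.val_succ, Fin.val_last]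
  omega

namespace MCb

variable {G : DGraph V} {k ℓ : ℕ}

/- `MCb` is a semireducible `def`, so `b.1` and `⟨f, h⟩ : MCb G k ℓ` typecheck only after unfolding
it, which `rw` does not do; these named versions avoid that. -/
def val (b : MCb G k ℓ) : Fin (k + 1) → V := Subtype.val b

def mk (f : Fin (k + 1) → V) (h : MCValid G k ℓ f) : MCb G k ℓ := ⟨f, h⟩

theorem val_mk (f : Fin (k + 1) → V) (h : MCValid G k ℓ f) : (mk f h).val = f := rfl

theorem ext {b b' : MCb G k ℓ} (h : b.val = b'.val) : b = b' := Subtype.ext h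

end MCb

theorem dMC_single (R : Type) [CommRing R] (G : DGraph V) (k ℓ : ℕ) (b : MCb G (k + 1) ℓ) :
    dMC R G k ℓ (single b 1) =
      ∑ j : Fin k, if h : MCValid G k ℓ (delMid b.val j) then
        single (MCb.mk _ h) ((-1 : R) ^ ((j : ℕ) + 1)) else 0 := by
  refine (lsum_single _ _ _ _).trans ((one_smul _ _).trans (Finset.sum_congr rfl fun j _ => ?_))
  by_cases hv : MCValid G k ℓ (delMid b.val j)
  · rw [dif_pos hv, dif_pos (show MCValid G k ℓ (delMid b.1 j) from hv)]
    exact smul_single_one _ _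
  · rw [dif_neg hv, dif_neg (show ¬MCValid G k ℓ (delMid b.1 j) from hv)]
    exact smul_zero (A := MCb G k ℓ →₀ R) _

theorem eMC_single (R : Type) [CommRing R] (G : DGraph V) (k ℓ : ℕ) (b : MCb G k ℓ) (r : R) :
    eMC R G k ℓ (single b r) = single b.val r :=
  mapDomain_single

theorem eMC_injective (R : Type) [CommRing R] (G : DGraph V) (k ℓ : ℕ) :
    Function.Injective (eMC R G k ℓ) :=
  mapDomain_injective Subtype.val_injective

section Convex

variable {G : DGraph V} {A : Set V}
  (hconv : ∀ a b : A, (G.induce A).edist a b = G.edist a.1 b.1)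

def MCb.incl {k ℓ : ℕ} (b : MCb (G.induce A) k ℓ) : MCb G k ℓ :=
  MCb.mk (fun i => b.val i) ((mcValid_induce_iff hconv _).1 b.2)

theorem MCb.incl_injective {k ℓ : ℕ} :
    Function.Injective (MCb.incl hconv : MCb (G.induce A) k ℓ → MCb G k ℓ) :=
  fun _ _ h => MCb.ext <| funext fun i => Subtype.ext <| congrFun (congrArg MCb.val h) i

theorem MCb.exists_incl_eq_of_last_mem (hnoentry : ∀ u v : V, u ∉ A → v ∈ A → ¬ G.Adj u v)
    {k ℓ : ℕ} (b : MCb G k ℓ) (h : b.val (Fin.last k) ∈ A) : ∃ b', MCb.incl hconv b' = b :=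
  have hmem := b.2.mem_of_last_mem hnoentry h
  ⟨MCb.mk (fun i => ⟨b.val i, hmem i⟩) ((mcValid_induce_iff hconv _).2 b.2), rfl⟩

variable (R : Type) [CommRing R]

noncomputable def inclMC (k ℓ : ℕ) : MCMod R (G.induce A) k ℓ →ₗ[R] MCMod R G k ℓ :=
  lmapDomain R R (MCb.incl hconv)

noncomputable def projMC (k ℓ : ℕ) : MCMod R G k ℓ →ₗ[R] MCMod R (G.induce A) k ℓ :=
  lcomapDomain (MCb.incl hconv) (MCb.incl_injective hconv)

theorem inclMC_single {k ℓ : ℕ} (b : MCb (G.induce A) k ℓ) (r : R) :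
    inclMC hconv R k ℓ (single b r) = single (MCb.incl hconv b) r :=
  mapDomain_single

theorem projMC_inclMC {k ℓ : ℕ} (c : MCMod R (G.induce A) k ℓ) :
    projMC hconv R k ℓ (inclMC hconv R k ℓ c) = c :=
  comapDomain_mapDomain _ (MCb.incl_injective hconv) c

theorem projMC_single_of_last_not_mem {k ℓ : ℕ} (b : MCb G k ℓ) (h : b.val (Fin.last k) ∉ A)
    (r : R) : projMC hconv R k ℓ (single b r) = 0 :=
  comapDomain_single_of_not_mem_range (by rintro ⟨b', rfl⟩; exact h (b'.val _).2) r _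

theorem inclMC_eq_of_eMC_single {k ℓ : ℕ} (ι : MCMod R (G.induce A) k ℓ →ₗ[R] MCMod R G k ℓ)
    (hι : ∀ b, eMC R G k ℓ (ι (single b 1)) = single (fun i => (b.val i : V)) 1) :
    ι = inclMC hconv R k ℓ := by
  ext b : 2
  simp only [LinearMap.comp_apply, lsingle_apply, inclMC_single]
  exact eMC_injective R G k ℓ ((hι b).trans (eMC_single R G k ℓ (MCb.incl hconv b) 1).symm)

theorem dMC_inclMC {k ℓ : ℕ} (c : MCMod R (G.induce A) (k + 1) ℓ) :
    dMC R G k ℓ (inclMC hconv R (k + 1) ℓ c) = inclMC hconv R k ℓ (dMC R (G.induce A) k ℓ c) := by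
  suffices (dMC R G k ℓ).comp (inclMC hconv R (k + 1) ℓ) =
      (inclMC hconv R k ℓ).comp (dMC R (G.induce A) k ℓ) from LinearMap.congr_fun this c
  ext b : 2
  simp only [LinearMap.comp_apply, lsingle_apply, inclMC_single, dMC_single, map_sum]
  refine Finset.sum_congr rfl fun j _ => ?_
  have hiff : MCValid G k ℓ (delMid (MCb.incl hconv b).val j) ↔
      MCValid (G.induce A) k ℓ (delMid b.val j) := (mcValid_induce_iff hconv _).symm
  by_cases hv : MCValid (G.induce A) k ℓ (delMid b.val j)
  · rw [dif_pos (hiff.2 hv), dif_pos hv, inclMC_single]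
    rfl
  · rw [dif_neg (mt hiff.1 hv), dif_neg hv, map_zero]

theorem projMC_dMC_single_of_last_not_mem {k ℓ : ℕ} (b : MCb G (k + 1) ℓ)
    (h : b.val (Fin.last (k + 1)) ∉ A) : projMC hconv R k ℓ (dMC R G k ℓ (single b 1)) = 0 := by
  rw [dMC_single, map_sum]
  refine Finset.sum_eq_zero fun j _ => ?_
  split_ifs with hv
  · exact projMC_single_of_last_not_mem hconv R _ (by rwa [MCb.val_mk, delMid_last]) _
  · exact map_zero _

theorem dMC_projMC (hnoentry : ∀ u v : V, u ∉ A → v ∈ A → ¬ G.Adj u v) {k ℓ : ℕ}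
    (c : MCMod R G (k + 1) ℓ) :
    dMC R (G.induce A) k ℓ (projMC hconv R (k + 1) ℓ c) = projMC hconv R k ℓ (dMC R G k ℓ c) := by
  suffices (dMC R (G.induce A) k ℓ).comp (projMC hconv R (k + 1) ℓ) =
      (projMC hconv R k ℓ).comp (dMC R G k ℓ) from LinearMap.congr_fun this c
  ext b : 2
  simp only [LinearMap.comp_apply, lsingle_apply]
  by_cases h : b.val (Fin.last (k + 1)) ∈ A
  · obtain ⟨b', rfl⟩ := MCb.exists_incl_eq_of_last_mem hconv hnoentry b h
    rw [← inclMC_single, projMC_inclMC, dMC_inclMC, projMC_inclMC]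
  · rw [projMC_single_of_last_not_mem hconv R b h, map_zero,
      projMC_dMC_single_of_last_not_mem hconv R b h]

end Convex

/-- if `A ⊆ X` is convex and there are no edges from `X∖A` into `A`, the
map `p : MC(X) → MC(A)`, sending a generator to itself if its last entry lies in `A`
and to `0` otherwise, is a chain map splitting the inclusion `MC(A) → MC(X)`. -/
theorem convex_splitting (R : Type) [CommRing R] (G : DGraph V) (A : Set V)
    (hconv : ∀ a b : A, (G.induce A).edist a b = G.edist a.1 b.1)
    (hnoentry : ∀ u v : V, u ∉ A → v ∈ A → ¬ G.Adj u v) :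
    ∃ p : ∀ k ℓ, MCMod R G k ℓ →ₗ[R] MCMod R (G.induce A) k ℓ,
      -- `p` is given on basis elements by the stated formula:
      (∀ k ℓ (b : MCb G k ℓ),
        Finsupp.lmapDomain R R (fun b' : MCb (G.induce A) k ℓ => fun i => (b'.1 i : V))
            (p k ℓ (Finsupp.single b 1)) =
          if b.1 (Fin.last k) ∈ A then Finsupp.single b.1 1 else 0) ∧
      -- `p` is a chain map:
      (∀ k ℓ (c : MCMod R G (k + 1) ℓ),
        dMC R (G.induce A) k ℓ (p (k + 1) ℓ c) = p k ℓ (dMC R G k ℓ c)) ∧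
      -- `p` splits the inclusion `ι : MC(A) → MC(X)`:
      (∀ ι : ∀ k ℓ, MCMod R (G.induce A) k ℓ →ₗ[R] MCMod R G k ℓ,
        (∀ k ℓ (b : MCb (G.induce A) k ℓ),
          eMC R G k ℓ (ι k ℓ (Finsupp.single b 1)) =
            Finsupp.single (fun i => (b.1 i : V)) 1) →
        ∀ k ℓ (c : MCMod R (G.induce A) k ℓ), p k ℓ (ι k ℓ c) = c) := by
  refine ⟨projMC hconv R, fun k ℓ b => ?_, fun k ℓ c => dMC_projMC hconv R hnoentry c,
    fun ι hι k ℓ c => ?_⟩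
  · split_ifs with h
    · obtain ⟨b', rfl⟩ := MCb.exists_incl_eq_of_last_mem hconv hnoentry b h
      rw [← inclMC_single, projMC_inclMC, lmapDomain_apply, mapDomain_single]
      rfl
    · rw [projMC_single_of_last_not_mem hconv R b h, map_zero]
  · rw [inclMC_eq_of_eMC_single hconv R (ι k ℓ) (hι k ℓ), projMC_inclMC]
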